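/- Let T_n be the sequence of polynomials defined by T_0(x) = x and T_n(x) = (1 - x²)·T_{n-1}'(x) for n ≥ 1. Then for every n ≥ 1, B_{2n} = (1/2^{2n}) · Σ_{j=0}^{n} k_j/(2j+1), where k_j is the coefficient of x^{2j} in the polynomial T_{2n-1}(x); that is, the 2n-th Bernoulli number equals 2^{-2n} times a sum of fractions whose denominators are the consecutive odd numbers 1, 3, 5, …, 2n+1 and whose numerators are the (integer) coefficients of T_{2n-1}. -/

import Mathlib

/-!
Since `tanh' = 1 - tanh²`, the `T m` are the derivative polynomials of `tanh`: by the addition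
formula, `∑ₘ T m (u) tᵐ / m! = tanh (t + artanh u) = (u + tanh t) / (1 + u tanh t)`, so the
coefficient of `uᵏ` in `T m` is `m!` times the `tᵐ`-coefficient of the coefficient of `uᵏ`
on the right. Weighting `u²ʲ` by `1 / (2j + 1)` is taking `½ ∫₋₁¹ du`; applied to the
right-hand side, and using `artanh (tanh t) = t`, it gives `d/dt (t coth t)` (compare after
multiplying by `tanh² t`), and `t coth t = 2t / (e²ᵗ - 1) + t` has coefficients `2ⁿ Bₙ / n!`
for `n ≠ 1`. All of this is done with formal power series over `ℚ`; the sum over `j` is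
truncated, which is exact modulo a power of `X`.
-/

open Polynomial

noncomputable def T : ℕ → Polynomial ℚ
  | 0 => Polynomial.X
  | n + 1 => (1 - Polynomial.X ^ 2) * Polynomial.derivative (T n)

open Finset Nat

namespace PowerSeries

theorem X_pow_succ_dvd_of_X_pow_dvd_derivative {R : Type*} [CommRing R] [IsAddTorsionFree R]
    {f : R⟦X⟧} {n : ℕ} (h0 : constantCoeff f = 0) (hd : X ^ n ∣ d⁄dX R f) :
    X ^ (n + 1) ∣ f := by
  rw [X_pow_dvd_iff] at hd ⊢
  intro i hi
  cases i with
  | zero => simpa using h0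
  | succ i =>
    have := hd i (by omega)
    rw [coeff_derivative, mul_comm, ← Nat.cast_succ, ← nsmul_eq_mul] at this
    exact (smul_eq_zero.1 this).resolve_left (by omega)

theorem X_pow_dvd_of_X_pow_add_dvd_mul_pow {R : Type*} [CommRing R] [IsDomain R]
    {f g : R⟦X⟧} {n k : ℕ} (hg : g.order = 1) (h : X ^ (n + k) ∣ f * g ^ k) :
    X ^ n ∣ f := by
  rw [pow_dvd_iff_le_emultiplicity, ← order_eq_emultiplicity_X, order_mul, order_pow,
    hg] at *
  push_cast at h
  simpa using h

noncomputable def tanhSeries : ℚ⟦X⟧ := (exp ℚ ^ 2 - 1) * (exp ℚ ^ 2 + 1)⁻¹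

theorem derivative_exp_sq : d⁄dX ℚ (exp ℚ ^ 2) = 2 * exp ℚ ^ 2 := by
  rw [derivative_pow, derivative_exp]; ring

theorem exp_sq_add_one_ne_zero : (exp ℚ ^ 2 + 1 : ℚ⟦X⟧) ≠ 0 := by
  intro h
  simpa using congrArg constantCoeff h

theorem tanhSeries_mul_exp_sq_add_one : tanhSeries * (exp ℚ ^ 2 + 1) = exp ℚ ^ 2 - 1 := by
  rw [tanhSeries, mul_assoc, PowerSeries.inv_mul_cancel _ (by simp), mul_one]

theorem constantCoeff_tanhSeries : constantCoeff tanhSeries = 0 := by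
  simp [tanhSeries]

theorem derivative_tanhSeries : d⁄dX ℚ tanhSeries = 1 - tanhSeries ^ 2 := by
  refine mul_right_cancel₀ exp_sq_add_one_ne_zero ?_
  have h := congrArg (d⁄dX ℚ) tanhSeries_mul_exp_sq_add_one
  rw [Derivation.leibniz, smul_eq_mul, smul_eq_mul, map_add, map_sub, derivative_exp_sq,
    Derivation.map_one_eq_zero] at h
  linear_combination h + (tanhSeries - 1) * tanhSeries_mul_exp_sq_add_one

theorem order_tanhSeries : tanhSeries.order = 1 := by
  have h := congrArg (coeff 0) derivative_tanhSeries
  rw [coeff_derivative] at h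
  have hcoeff : coeff 1 tanhSeries = 1 := by simpa [constantCoeff_tanhSeries] using h
  refine order_eq_nat.2 ⟨by simp [hcoeff], fun i hi => ?_⟩
  simp [Nat.lt_one_iff.1 hi, constantCoeff_tanhSeries]

-- Truncation of `artanh (tanh t) = ∑ⱼ tanh²ʲ⁺¹ t / (2j + 1) = t`.
noncomputable def artanhTrunc (N : ℕ) : ℚ⟦X⟧ :=
  ∑ j ∈ range N, (2 * j + 1 : ℚ)⁻¹ • tanhSeries ^ (2 * j + 1)

theorem derivative_artanhTrunc (N : ℕ) :
    d⁄dX ℚ (artanhTrunc N) = 1 - tanhSeries ^ (2 * N) := by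
  have hterm (j : ℕ) : d⁄dX ℚ ((2 * j + 1 : ℚ)⁻¹ • tanhSeries ^ (2 * j + 1)) =
      tanhSeries ^ (2 * j) - tanhSeries ^ (2 * (j + 1)) := by
    rw [Derivation.map_smul, derivative_pow, Nat.add_sub_cancel, mul_assoc, ← nsmul_eq_mul,
      ← Nat.cast_smul_eq_nsmul ℚ, smul_smul]
    push_cast
    rw [inv_mul_cancel₀ (by positivity), one_smul, derivative_tanhSeries]
    ring
  simp only [artanhTrunc, map_sum, hterm, sum_range_sub', pow_zero, mul_zero]

theorem X_pow_dvd_artanhTrunc_sub_X (N : ℕ) : X ^ (2 * N + 1) ∣ artanhTrunc N - X := by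
  refine X_pow_succ_dvd_of_X_pow_dvd_derivative ?_ ?_
  · simp [artanhTrunc, constantCoeff_tanhSeries]
  · rw [map_sub, derivative_artanhTrunc, derivative_X, sub_sub_cancel_left, dvd_neg]
    exact pow_dvd_pow_of_dvd (X_dvd_iff.2 constantCoeff_tanhSeries) _

-- The coefficient of `uᵏ` in `tanh (t + artanh u) = (u + tanh t) / (1 + u tanh t)`.
noncomputable def tanhAddCoeff : ℕ → ℚ⟦X⟧
  | 0 => tanhSeries
  | k + 1 => (-1 : ℚ) ^ k • (tanhSeries ^ k - tanhSeries ^ (k + 2))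

theorem derivative_tanhAddCoeff_zero : d⁄dX ℚ (tanhAddCoeff 0) = tanhAddCoeff 1 := by
  simp [tanhAddCoeff, derivative_tanhSeries]

theorem derivative_tanhAddCoeff_succ (k : ℕ) :
    d⁄dX ℚ (tanhAddCoeff (k + 1)) =
      (k + 2 : ℚ) • tanhAddCoeff (k + 2) - (k : ℚ) • tanhAddCoeff k := by
  rcases k with _ | k <;>
  · simp only [tanhAddCoeff, Derivation.map_smul, map_sub, derivative_pow, derivative_tanhSeries]
    simp only [Algebra.smul_def, map_pow, map_neg, map_one, map_add, map_natCast, map_ofNat]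
    push_cast
    ring

-- Pairs `uᵏ` with `½ ∫₋₁¹ uᵏ du`, which is `1 / (k + 1)` for even `k` and `0` for odd
-- `k`.
noncomputable def tanhAddMean (N : ℕ) : ℚ⟦X⟧ :=
  ∑ j ∈ range N, (2 * j + 1 : ℚ)⁻¹ • tanhAddCoeff (2 * j)

theorem tanhAddMean_mul_tanhSeries_sq (N : ℕ) :
    tanhAddMean (N + 1) * tanhSeries ^ 2 =
      artanhTrunc (N + 1) * (tanhSeries ^ 2 - 1) + tanhSeries := by
  induction N with
  | zero =>
    simp only [tanhAddMean, artanhTrunc, tanhAddCoeff, sum_range_one, mul_zero, zero_add,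
      cast_zero, inv_one, one_smul, pow_one]
    ring
  | succ N ih =>
    rw [tanhAddMean, sum_range_succ, ← tanhAddMean, artanhTrunc, sum_range_succ, ← artanhTrunc]
    rw [show 2 * (N + 1) = (2 * N + 1) + 1 by ring, tanhAddCoeff,
      (odd_two_mul_add_one N).neg_one_pow]
    simp only [smul_eq_C_mul, map_neg, map_one]
    linear_combination ih

-- `t coth t = 2t / (e²ᵗ - 1) + t`
noncomputable def xCothSeries : ℚ⟦X⟧ := rescale 2 (bernoulliPowerSeries ℚ) + X

theorem xCothSeries_mul_tanhSeries : xCothSeries * tanhSeries = X := by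
  refine mul_right_cancel₀ exp_sq_add_one_ne_zero ?_
  have h := congrArg (rescale (2 : ℚ)) (bernoulliPowerSeries_mul_exp_sub_one ℚ)
  rw [map_mul, map_sub, map_one, rescale_X, map_ofNat] at h
  have hexp : rescale 2 (exp ℚ) = exp ℚ ^ 2 := by
    simpa using (exp_pow_eq_rescale_exp (A := ℚ) 2).symm
  rw [mul_assoc, tanhSeries_mul_exp_sq_add_one, xCothSeries, ← hexp]
  linear_combination h

theorem derivative_xCothSeries_mul_tanhSeries_sq :
    d⁄dX ℚ xCothSeries * tanhSeries ^ 2 = X * tanhSeries ^ 2 - X + tanhSeries := by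
  have h := congrArg (d⁄dX ℚ) xCothSeries_mul_tanhSeries
  rw [Derivation.leibniz, smul_eq_mul, smul_eq_mul, derivative_tanhSeries, derivative_X] at h
  linear_combination tanhSeries * h + (tanhSeries ^ 2 - 1) * xCothSeries_mul_tanhSeries

theorem coeff_xCothSeries {n : ℕ} (hn : n ≠ 1) :
    coeff n xCothSeries = 2 ^ n * _root_.bernoulli n / n ! := by
  simp [xCothSeries, coeff_rescale, bernoulliPowerSeries, coeff_X, hn, mul_div_assoc]

theorem X_pow_dvd_tanhAddMean_sub_derivative_xCothSeries (N : ℕ) :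
    X ^ (2 * N + 1) ∣ tanhAddMean (N + 1) - d⁄dX ℚ xCothSeries := by
  refine X_pow_dvd_of_X_pow_add_dvd_mul_pow (k := 2) order_tanhSeries ?_
  have h : (tanhAddMean (N + 1) - d⁄dX ℚ xCothSeries) * tanhSeries ^ 2 =
      (artanhTrunc (N + 1) - X) * (tanhSeries ^ 2 - 1) := by
    linear_combination tanhAddMean_mul_tanhSeries_sq N - derivative_xCothSeries_mul_tanhSeries_sq
  rw [h]
  exact (X_pow_dvd_artanhTrunc_sub_X (N + 1)).mul_right _

end PowerSeries

namespace Polynomial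

variable {R : Type*} [CommRing R]

theorem coeff_one_sub_X_sq_mul_derivative_zero (p : R[X]) :
    ((1 - X ^ 2) * derivative p).coeff 0 = p.coeff 1 := by
  simp [sub_mul, coeff_derivative]

theorem coeff_one_sub_X_sq_mul_derivative_succ (p : R[X]) (k : ℕ) :
    ((1 - X ^ 2) * derivative p).coeff (k + 1) = (k + 2) * p.coeff (k + 2) - k * p.coeff k := by
  rcases k with _ | k
  · simp only [sub_mul, one_mul, X_pow_mul, coeff_sub, coeff_derivative, coeff_mul_X_pow',
      if_neg (show ¬2 ≤ 0 + 1 by omega)]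
    push_cast
    ring
  · simp only [sub_mul, one_mul, X_pow_mul, coeff_sub, coeff_derivative, coeff_mul_X_pow',
      if_pos (show 2 ≤ k + 1 + 1 by omega), show k + 1 + 1 - 2 = k by omega]
    push_cast
    ring

end Polynomial

-- Coefficientwise, both sides satisfy `∂ₜ F = (1 - u²) ∂ᵤ F` and agree at `t = 0`.
open PowerSeries in
theorem coeff_T (m k : ℕ) : (T m).coeff k = m ! * coeff m (tanhAddCoeff k) := by
  induction m generalizing k with
  | zero =>
    rcases k with _ | _ | k <;>
      simp [T, tanhAddCoeff, Polynomial.coeff_X, constantCoeff_tanhSeries]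
  | succ m ih =>
    suffices (T (m + 1)).coeff k = m ! * coeff m (d⁄dX ℚ (tanhAddCoeff k)) by
      rw [this, PowerSeries.coeff_derivative, factorial_succ]
      push_cast
      ring
    rcases k with _ | k
    · rw [T, Polynomial.coeff_one_sub_X_sq_mul_derivative_zero, ih, derivative_tanhAddCoeff_zero]
    · rw [T, Polynomial.coeff_one_sub_X_sq_mul_derivative_succ, ih, ih,
        derivative_tanhAddCoeff_succ, map_sub, map_smul, map_smul, smul_eq_mul, smul_eq_mul]
      ring

open PowerSeries in
theorem sum_coeff_T_div_eq_bernoulli {m N : ℕ} (hm : m ≠ 0) (hmN : m < 2 * N + 1) :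
    ∑ j ∈ range (N + 1), (T m).coeff (2 * j) / (2 * (j : ℚ) + 1) =
      2 ^ (m + 1) * _root_.bernoulli (m + 1) := by
  have hmean : ∑ j ∈ range (N + 1), (T m).coeff (2 * j) / (2 * (j : ℚ) + 1) =
      m ! * coeff m (tanhAddMean (N + 1)) := by
    simp only [tanhAddMean, map_sum, PowerSeries.coeff_smul, coeff_T, mul_sum, smul_eq_mul]
    refine sum_congr rfl fun j _ => ?_
    ring
  have htrunc : coeff m (tanhAddMean (N + 1)) = coeff m (d⁄dX ℚ xCothSeries) :=
    sub_eq_zero.1 (by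
      simpa using X_pow_dvd_iff.1 (X_pow_dvd_tanhAddMean_sub_derivative_xCothSeries N) m hmN)
  rw [hmean, htrunc, PowerSeries.coeff_derivative, coeff_xCothSeries (by omega), factorial_succ]
  push_cast
  field_simp

theorem bernoulli_as_sum_of_fractions (n : ℕ) (hn : 1 ≤ n) :
    _root_.bernoulli (2 * n) =
      (1 / 2 ^ (2 * n)) *
        ∑ j ∈ Finset.range (n + 1), (T (2 * n - 1)).coeff (2 * j) / (2 * (j : ℚ) + 1) := by
  have hsum := sum_coeff_T_div_eq_bernoulli (m := 2 * n - 1) (N := n) (by omega) (by omega)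
  rw [show 2 * n - 1 + 1 = 2 * n by omega] at hsum
  rw [hsum]
  field_simp
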